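/- In the coalescence setting (G is the coalescence of H₁ and H₂ via the non-isolated vertex x), if G is weak bicritical, then x is a critical vertex of G, i.e., γ(G − x) < γ(G). -/
import Mathlib


open SimpleGraph Set

/-- `S` is a dominating set of the induced subgraph of `G` on the vertex set `A`:
`S ⊆ A` and every vertex of `A` is in the closed neighborhood of some vertex of `S`. -/
def IsDomOn {V : Type*} (G : SimpleGraph V) (A S : Set V) : Prop :=
  S ⊆ A ∧ ∀ v ∈ A, ∃ s ∈ S, s = v ∨ G.Adj s v

/-- The domination number of the induced subgraph of `G` on the vertex set `A`. -/
noncomputable def domNumOn {V : Type*} (G : SimpleGraph V) (A : Set V) : ℕ :=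
  sInf {n | ∃ S : Set V, IsDomOn G A S ∧ S.ncard = n}

/-- The domination number of `G`. -/
noncomputable def domNum {V : Type*} (G : SimpleGraph V) : ℕ :=
  domNumOn G Set.univ

/-- `y` is a critical vertex of the induced subgraph of `G` on `A`:
deleting `y` decreases the domination number. -/
def IsCritVertexOn {V : Type*} (G : SimpleGraph V) (A : Set V) (y : V) : Prop :=
  domNumOn G (A \ {y}) < domNumOn G A

/-- The induced subgraph of `G` on `A` is critical: all its vertices are critical. -/
def CriticalOn {V : Type*} (G : SimpleGraph V) (A : Set V) : Prop :=
  ∀ y ∈ A, IsCritVertexOn G A y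

/-- The induced subgraph of `G` on `A` is weak bicritical: no vertex deletion increases the
domination number (`V⁺ = ∅`), and deleting any vertex that keeps the domination number
unchanged (a vertex of `V⁰`) yields a critical graph. -/
def WeakBicriticalOn {V : Type*} (G : SimpleGraph V) (A : Set V) : Prop :=
  (∀ y ∈ A, domNumOn G (A \ {y}) ≤ domNumOn G A) ∧
  (∀ y ∈ A, domNumOn G (A \ {y}) = domNumOn G A → CriticalOn G (A \ {y}))


lemma isDomOn_self {V : Type*} (G : SimpleGraph V) (A : Set V) : IsDomOn G A A :=
  ⟨subset_rfl, fun v hv => ⟨v, hv, Or.inl rfl⟩⟩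

lemma domNumOn_le {V : Type*} (G : SimpleGraph V) {A S : Set V} (h : IsDomOn G A S) :
    domNumOn G A ≤ S.ncard := Nat.sInf_le ⟨S, h, rfl⟩

lemma exists_min_dom {V : Type*} (G : SimpleGraph V) (A : Set V) :
    ∃ S, IsDomOn G A S ∧ S.ncard = domNumOn G A := by
  have hne : {n | ∃ S : Set V, IsDomOn G A S ∧ S.ncard = n}.Nonempty :=
    ⟨A.ncard, A, isDomOn_self G A, rfl⟩
  obtain ⟨S, hS, hn⟩ := Nat.sInf_mem hne
  exact ⟨S, hS, hn⟩

lemma domNumOn_union_le {V : Type*} [Fintype V] (G : SimpleGraph V) (A B : Set V) :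
    domNumOn G (A ∪ B) ≤ domNumOn G A + domNumOn G B := by
  obtain ⟨S1, h1, e1⟩ := exists_min_dom G A
  obtain ⟨S2, h2, e2⟩ := exists_min_dom G B
  have hd : IsDomOn G (A ∪ B) (S1 ∪ S2) := by
    constructor
    · exact union_subset_union h1.1 h2.1
    · rintro v (hv | hv)
      · obtain ⟨s, hs, h⟩ := h1.2 v hv; exact ⟨s, Or.inl hs, h⟩
      · obtain ⟨s, hs, h⟩ := h2.2 v hv; exact ⟨s, Or.inr hs, h⟩
  calc domNumOn G (A ∪ B) ≤ (S1 ∪ S2).ncard := domNumOn_le G hd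
    _ ≤ S1.ncard + S2.ncard := Set.ncard_union_le _ _
    _ = _ := by rw [e1, e2]

lemma domNumOn_add_le {V : Type*} [Fintype V] (G : SimpleGraph V) {V1 V2 A B : Set V} {x : V}
    (hinter : V1 ∩ V2 = {x})
    (hsep : ∀ a ∈ V1, ∀ b ∈ V2, a ≠ x → b ≠ x → ¬ G.Adj a b)
    (hA : A ⊆ V1 \ {x}) (hB : B ⊆ V2 \ {x}) :
    domNumOn G A + domNumOn G B ≤ domNumOn G (A ∪ B) := by
  obtain ⟨S, hS, eS⟩ := exists_min_dom G (A ∪ B)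
  have hSA : IsDomOn G A (S ∩ A) := by
    refine ⟨inter_subset_right, fun v hv => ?_⟩
    obtain ⟨s, hs, h⟩ := hS.2 v (Or.inl hv)
    rcases h with rfl | hadj
    · exact ⟨s, ⟨hs, hv⟩, Or.inl rfl⟩
    · rcases hS.1 hs with hsA | hsB
      · exact ⟨s, ⟨hs, hsA⟩, Or.inr hadj⟩
      · exact absurd hadj.symm (hsep v (hA hv).1 s (hB hsB).1 (hA hv).2 (hB hsB).2)
  have hSB : IsDomOn G B (S ∩ B) := by
    refine ⟨inter_subset_right, fun v hv => ?_⟩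
    obtain ⟨s, hs, h⟩ := hS.2 v (Or.inr hv)
    rcases h with rfl | hadj
    · exact ⟨s, ⟨hs, hv⟩, Or.inl rfl⟩
    · rcases hS.1 hs with hsA | hsB
      · exact absurd hadj (hsep s (hA hsA).1 v (hB hv).1 (hA hsA).2 (hB hv).2)
      · exact ⟨s, ⟨hs, hsB⟩, Or.inr hadj⟩
  have hdisj : Disjoint A B := by
    rw [Set.disjoint_left]
    intro v hvA hvB
    have hm : v ∈ V1 ∩ V2 := ⟨(hA hvA).1, (hB hvB).1⟩
    rw [hinter] at hm
    exact (hA hvA).2 hm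
  have hdisj' : Disjoint (S ∩ A) (S ∩ B) :=
    hdisj.mono inter_subset_right inter_subset_right
  calc domNumOn G A + domNumOn G B ≤ (S ∩ A).ncard + (S ∩ B).ncard :=
        Nat.add_le_add (domNumOn_le G hSA) (domNumOn_le G hSB)
    _ = ((S ∩ A) ∪ (S ∩ B)).ncard := (Set.ncard_union_eq hdisj').symm
    _ ≤ S.ncard := Set.ncard_le_ncard (union_subset inter_subset_left inter_subset_left)
    _ = _ := eS

/-- Coalescence: if G is weak bicritical, then x is a critical vertex of G. -/
theorem stmt_14 {V : Type*} [Fintype V] (G : SimpleGraph V) (x : V) (V1 V2 : Set V)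
    (hunion : V1 ∪ V2 = Set.univ) (hinter : V1 ∩ V2 = {x})
    (hsep : ∀ a ∈ V1, ∀ b ∈ V2, a ≠ x → b ≠ x → ¬ G.Adj a b)
    (hx1 : ∃ a ∈ V1, G.Adj x a) (hx2 : ∃ b ∈ V2, G.Adj x b)
    (hwb : WeakBicriticalOn G Set.univ) :
    IsCritVertexOn G Set.univ x := by
  by_contra hcon
  unfold IsCritVertexOn at hcon
  push_neg at hcon
  have heq : domNumOn G (Set.univ \ {x}) = domNumOn G Set.univ :=
    le_antisymm (hwb.1 x (mem_univ x)) hcon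
  obtain ⟨a, haV1, hxa⟩ := hx1
  obtain ⟨b, hbV2, hxb⟩ := hx2
  have hax : a ≠ x := fun h => G.irrefl (h ▸ hxa)
  have hbx : b ≠ x := fun h => G.irrefl (h ▸ hxb)
  have haV2 : a ∉ V2 := fun h => hax (by have : a ∈ V1 ∩ V2 := ⟨haV1, h⟩; rwa [hinter] at this)
  have hbV1 : b ∉ V1 := fun h => hbx (by have : b ∈ V1 ∩ V2 := ⟨h, hbV2⟩; rwa [hinter] at this)
  have hv12 : ∀ v : V, v ∈ V1 ∨ v ∈ V2 := fun v => by
    have : v ∈ V1 ∪ V2 := hunion.symm ▸ mem_univ v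
    exact this
  have hsplit : Set.univ \ {x} = (V1 \ {x}) ∪ (V2 \ {x}) := by
    ext v
    simp only [Set.mem_diff, Set.mem_union, Set.mem_univ, true_and, Set.mem_singleton_iff]
    constructor
    · intro hv; rcases hv12 v with h | h
      · exact Or.inl ⟨h, hv⟩
      · exact Or.inr ⟨h, hv⟩
    · rintro (⟨_, hv⟩ | ⟨_, hv⟩) <;> exact hv
  have hsplita : (Set.univ \ {x}) \ {a} = ((V1 \ {x}) \ {a}) ∪ (V2 \ {x}) := by
    ext v
    simp only [Set.mem_diff, Set.mem_union, Set.mem_univ, true_and, Set.mem_singleton_iff]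
    constructor
    · rintro ⟨hvx, hva⟩; rcases hv12 v with h | h
      · exact Or.inl ⟨⟨h, hvx⟩, hva⟩
      · exact Or.inr ⟨h, hvx⟩
    · rintro (⟨⟨_, hvx⟩, hva⟩ | ⟨hv2, hvx⟩)
      · exact ⟨hvx, hva⟩
      · exact ⟨hvx, fun h => haV2 (h ▸ hv2)⟩
  have hsplitb : (Set.univ \ {x}) \ {b} = (V1 \ {x}) ∪ ((V2 \ {x}) \ {b}) := by
    ext v
    simp only [Set.mem_diff, Set.mem_union, Set.mem_univ, true_and, Set.mem_singleton_iff]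
    constructor
    · rintro ⟨hvx, hvb⟩; rcases hv12 v with h | h
      · exact Or.inl ⟨h, hvx⟩
      · exact Or.inr ⟨⟨h, hvx⟩, hvb⟩
    · rintro (⟨hv1, hvx⟩ | ⟨⟨_, hvx⟩, hvb⟩)
      · exact ⟨hvx, fun h => hbV1 (h ▸ hv1)⟩
      · exact ⟨hvx, hvb⟩
  have hcrit := hwb.2 x (mem_univ x) heq
  have hcrit_a : domNumOn G ((Set.univ \ {x}) \ {a}) < domNumOn G (Set.univ \ {x}) :=
    hcrit a ⟨mem_univ a, hax⟩
  have hcrit_b : domNumOn G ((Set.univ \ {x}) \ {b}) < domNumOn G (Set.univ \ {x}) :=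
    hcrit b ⟨mem_univ b, hbx⟩
  have hub : domNumOn G (Set.univ \ {x}) ≤ domNumOn G (V1 \ {x}) + domNumOn G (V2 \ {x}) := by
    rw [hsplit]; exact domNumOn_union_le G _ _
  have hlb : domNumOn G (V1 \ {x}) + domNumOn G (V2 \ {x}) ≤ domNumOn G (Set.univ \ {x}) := by
    rw [hsplit]; exact domNumOn_add_le G hinter hsep subset_rfl subset_rfl
  have hlba : domNumOn G ((V1 \ {x}) \ {a}) + domNumOn G (V2 \ {x})
      ≤ domNumOn G ((Set.univ \ {x}) \ {a}) := by
    rw [hsplita]; exact domNumOn_add_le G hinter hsep diff_subset subset_rfl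
  have hlbb : domNumOn G (V1 \ {x}) + domNumOn G ((V2 \ {x}) \ {b})
      ≤ domNumOn G ((Set.univ \ {x}) \ {b}) := by
    rw [hsplitb]; exact domNumOn_add_le G hinter hsep subset_rfl diff_subset
  have ha1 : domNumOn G ((V1 \ {x}) \ {a}) + 1 ≤ domNumOn G (V1 \ {x}) := by omega
  have hb1 : domNumOn G ((V2 \ {x}) \ {b}) + 1 ≤ domNumOn G (V2 \ {x}) := by omega
  obtain ⟨S1, hS1, e1⟩ := exists_min_dom G ((V1 \ {x}) \ {a})
  obtain ⟨S2, hS2, e2⟩ := exists_min_dom G ((V2 \ {x}) \ {b})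
  have hdom : IsDomOn G Set.univ (S1 ∪ S2 ∪ {x}) := by
    refine ⟨subset_univ _, fun v _ => ?_⟩
    by_cases hvx : v = x
    · exact ⟨x, Or.inr rfl, Or.inl hvx.symm⟩
    rcases hv12 v with hv | hv
    · by_cases hva : v = a
      · exact ⟨x, Or.inr rfl, Or.inr (hva ▸ hxa)⟩
      · obtain ⟨s, hs, h⟩ := hS1.2 v ⟨⟨hv, hvx⟩, hva⟩
        exact ⟨s, Or.inl (Or.inl hs), h⟩
    · by_cases hvb : v = b
      · exact ⟨x, Or.inr rfl, Or.inr (hvb ▸ hxb)⟩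
      · obtain ⟨s, hs, h⟩ := hS2.2 v ⟨⟨hv, hvx⟩, hvb⟩
        exact ⟨s, Or.inl (Or.inr hs), h⟩
  have hfin : domNumOn G Set.univ ≤
      domNumOn G ((V1 \ {x}) \ {a}) + domNumOn G ((V2 \ {x}) \ {b}) + 1 := by
    calc domNumOn G Set.univ ≤ (S1 ∪ S2 ∪ {x}).ncard := domNumOn_le G hdom
      _ ≤ (S1 ∪ S2).ncard + ({x} : Set V).ncard := Set.ncard_union_le _ _
      _ ≤ S1.ncard + S2.ncard + ({x} : Set V).ncard :=
          Nat.add_le_add_right (Set.ncard_union_le _ _) _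
      _ = _ := by rw [e1, e2, Set.ncard_singleton]
  omega
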